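/- Let E be a bipartite channel on two qubits (d_A = d_B = 2) and define, for unit Bloch vector b, the local channels E_{±b}(ρ) = tr_B[E(ρ ⊗ (1/2)(I_B ± b·σ))]. Then the sub-unitarity satisfies u_{A→A}(E) ≤ (1/2)(u(E_{+b}) + u(E_{−b})), with equality when E is a product channel. -/

import Mathlib

open Matrix Kronecker ComplexOrder

/-- The Choi matrix of a linear map on matrices; the map is completely positive
iff this matrix is positive semidefinite. -/
noncomputable def choi {ι κ : Type*} [Fintype ι] [DecidableEq ι]
    (E : Matrix ι ι ℂ →ₗ[ℂ] Matrix κ κ ℂ) : Matrix (κ × ι) (κ × ι) ℂ :=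
  Matrix.of fun p q => E (Matrix.single p.2 q.2 1) p.1 q.1

/-- Partial trace over the second tensor factor. -/
noncomputable def ptraceB {m n : Type*} [Fintype n]
    (ρ : Matrix (m × n) (m × n) ℂ) : Matrix m m ℂ :=
  Matrix.of fun i j => ∑ k, ρ (i, k) (j, k)

/-- The Pauli matrices. -/
noncomputable def pauli : Fin 3 → Matrix (Fin 2) (Fin 2) ℂ
  | 0 => !![0, 1; 1, 0]
  | 1 => !![0, -Complex.I; Complex.I, 0]
  | 2 => !![1, 0; 0, -1]

/-- Hilbert–Schmidt-normalized Pauli basis element `σ_i/√2`. -/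
noncomputable def pauliN (i : Fin 3) : Matrix (Fin 2) (Fin 2) ℂ :=
  ((Real.sqrt 2 : ℂ))⁻¹ • pauli i

/-- The normalized identity `I/√2` on a qubit. -/
noncomputable def qubitId : Matrix (Fin 2) (Fin 2) ℂ :=
  ((Real.sqrt 2 : ℂ))⁻¹ • 1

/-- The unitarity `u(F) = tr[T_F†T_F]/3` of a qubit map, via its unital Pauli block. -/
noncomputable def unitarity (F : Matrix (Fin 2) (Fin 2) ℂ → Matrix (Fin 2) (Fin 2) ℂ) : ℝ :=
  (1 / 3 : ℝ) * ∑ i, ∑ j, ‖((pauliN i)ᴴ * F (pauliN j)).trace‖ ^ 2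

/-- The qubit state `(1/2)(I + b·σ)` with Bloch vector `b`, scaled by sign `ε`. -/
noncomputable def blochState (ε : ℝ) (b : Fin 3 → ℝ) : Matrix (Fin 2) (Fin 2) ℂ :=
  ((2 : ℂ))⁻¹ • ((1 : Matrix (Fin 2) (Fin 2) ℂ) + (ε : ℂ) • ∑ i, (b i : ℂ) • pauli i)

/-- The local channel `E_{±b}(ρ) = tr_B[E(ρ ⊗ (1/2)(I ± b·σ))]`. -/
noncomputable def localBloch
    (E : Matrix (Fin 2 × Fin 2) (Fin 2 × Fin 2) ℂ →ₗ[ℂ]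
         Matrix (Fin 2 × Fin 2) (Fin 2 × Fin 2) ℂ)
    (ε : ℝ) (b : Fin 3 → ℝ)
    (ρ : Matrix (Fin 2) (Fin 2) ℂ) : Matrix (Fin 2) (Fin 2) ℂ :=
  ptraceB (E (ρ ⊗ₖ blochState ε b))

/-- The sub-unitarity `u_{A→A}(E)` of a two-qubit channel in the normalized Pauli basis. -/
noncomputable def uAA
    (E : Matrix (Fin 2 × Fin 2) (Fin 2 × Fin 2) ℂ →ₗ[ℂ]
         Matrix (Fin 2 × Fin 2) (Fin 2 × Fin 2) ℂ) : ℝ :=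
  (1 / 3 : ℝ) * ∑ i, ∑ j,
    ‖((pauliN i ⊗ₖ qubitId)ᴴ * E (pauliN j ⊗ₖ qubitId)).trace‖ ^ 2

/-!
Expanding the reset state as `(1/2)(I ± b·σ) = (I/√2 ± Y_b)/√2` with `Y_b = b·σ/√2`, the Pauli
block of `E_{±b}` is `A ± B`, where `A` is the block defining `u_{A→A}(E)` and `B` collects the
matrix elements `⟨X_i ⊗ I/√2| E |X_j ⊗ Y_b⟩`. The parallelogram law turns the average of the two
unitarities into `u_{A→A}(E) + (1/3) Σ |B_ij|²`. For a product channel `E_A ⊗ E_B` each `B_ij`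
factors through `tr E_B(Y_b) = tr Y_b = 0`.
-/

section PartialTrace

variable {m n : Type*} [Fintype n]

lemma ptraceB_add (M N : Matrix (m × n) (m × n) ℂ) :
    ptraceB (M + N) = ptraceB M + ptraceB N := by
  ext i j
  simp [ptraceB, Finset.sum_add_distrib]

lemma ptraceB_smul (c : ℂ) (M : Matrix (m × n) (m × n) ℂ) :
    ptraceB (c • M) = c • ptraceB M := by
  ext i j
  simp [ptraceB, Finset.mul_sum]

lemma trace_mul_ptraceB [Fintype m] [DecidableEq n] (X : Matrix m m ℂ)
    (M : Matrix (m × n) (m × n) ℂ) :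
    (X * ptraceB M).trace = ((X ⊗ₖ (1 : Matrix n n ℂ)) * M).trace := by
  simp only [Matrix.trace, Matrix.diag, Matrix.mul_apply, ptraceB, Matrix.of_apply,
    Matrix.kroneckerMap_apply, Fintype.sum_prod_type, Matrix.one_apply]
  simp only [mul_ite, mul_one, mul_zero, ite_mul, zero_mul, Finset.sum_ite_eq,
    Finset.mem_univ, if_true, Finset.mul_sum]
  exact Finset.sum_congr rfl fun _ _ => Finset.sum_comm

end PartialTrace

lemma sum_sum_norm_add_sq_add_sum_sum_norm_sub_sq {ι κ F : Type*} [Fintype ι] [Fintype κ]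
    [NormedAddCommGroup F] [InnerProductSpace ℝ F] (A B : ι → κ → F) :
    ∑ i, ∑ j, ‖A i j + B i j‖ ^ 2 + ∑ i, ∑ j, ‖A i j - B i j‖ ^ 2
      = 2 * ∑ i, ∑ j, (‖A i j‖ ^ 2 + ‖B i j‖ ^ 2) := by
  simp only [← Finset.sum_add_distrib, Finset.mul_sum, parallelogram_law_with_norm ℝ]

lemma inv_sqrt_two_mul_self : ((Real.sqrt 2 : ℂ))⁻¹ * ((Real.sqrt 2 : ℂ))⁻¹ = (2 : ℂ)⁻¹ := by
  rw [← mul_inv, ← Complex.ofReal_mul, Real.mul_self_sqrt zero_le_two, Complex.ofReal_ofNat]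

lemma qubitId_conjTranspose : qubitIdᴴ = qubitId := by
  simp [qubitId, Matrix.conjTranspose_smul, Complex.conj_ofReal]

lemma trace_pauli (i : Fin 3) : (pauli i).trace = 0 := by
  fin_cases i <;> simp [pauli, Matrix.trace_fin_two]

noncomputable def blochY (b : Fin 3 → ℝ) : Matrix (Fin 2) (Fin 2) ℂ :=
  ((Real.sqrt 2 : ℂ))⁻¹ • ∑ i, (b i : ℂ) • pauli i

lemma trace_blochY (b : Fin 3 → ℝ) : (blochY b).trace = 0 := by
  simp [blochY, Matrix.trace_smul, Matrix.trace_sum, trace_pauli]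

lemma blochState_eq (ε : ℝ) (b : Fin 3 → ℝ) :
    blochState ε b = ((Real.sqrt 2 : ℂ))⁻¹ • qubitId
      + ((ε : ℂ) * ((Real.sqrt 2 : ℂ))⁻¹) • blochY b := by
  simp only [blochState, qubitId, blochY, smul_add, smul_smul, mul_assoc, inv_sqrt_two_mul_self]
  rw [mul_comm]

lemma trace_kronecker_qubitId_conjTranspose_mul (X : Matrix (Fin 2) (Fin 2) ℂ)
    (N : Matrix (Fin 2 × Fin 2) (Fin 2 × Fin 2) ℂ) :
    ((X ⊗ₖ qubitId)ᴴ * N).trace = ((Real.sqrt 2 : ℂ))⁻¹ * (Xᴴ * ptraceB N).trace := by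
  rw [conjTranspose_kronecker, qubitId_conjTranspose, trace_mul_ptraceB, qubitId,
    Matrix.kronecker_smul, Matrix.smul_mul, Matrix.trace_smul, smul_eq_mul]

/-- The matrix element `⟨X_i ⊗ I/√2| E |X_j ⊗ Y⟩` in the normalized Pauli basis. -/
noncomputable def pauliCoeff
    (E : Matrix (Fin 2 × Fin 2) (Fin 2 × Fin 2) ℂ →ₗ[ℂ]
         Matrix (Fin 2 × Fin 2) (Fin 2 × Fin 2) ℂ)
    (Y : Matrix (Fin 2) (Fin 2) ℂ) (i j : Fin 3) : ℂ :=
  ((pauliN i ⊗ₖ qubitId)ᴴ * E (pauliN j ⊗ₖ Y)).trace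

section PauliCoeff

variable (E : Matrix (Fin 2 × Fin 2) (Fin 2 × Fin 2) ℂ →ₗ[ℂ]
    Matrix (Fin 2 × Fin 2) (Fin 2 × Fin 2) ℂ) (b : Fin 3 → ℝ)

lemma trace_pauliN_mul_localBloch (ε : ℝ) (i j : Fin 3) :
    ((pauliN i)ᴴ * localBloch E ε b (pauliN j)).trace
      = pauliCoeff E qubitId i j + (ε : ℂ) * pauliCoeff E (blochY b) i j := by
  rw [pauliCoeff, pauliCoeff, trace_kronecker_qubitId_conjTranspose_mul,
    trace_kronecker_qubitId_conjTranspose_mul, localBloch, blochState_eq, Matrix.kronecker_add,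
    Matrix.kronecker_smul, Matrix.kronecker_smul, map_add, map_smul, map_smul, ptraceB_add,
    ptraceB_smul, ptraceB_smul, Matrix.mul_add, Matrix.mul_smul, Matrix.mul_smul,
    Matrix.trace_add, Matrix.trace_smul, Matrix.trace_smul, smul_eq_mul, smul_eq_mul]
  ring

lemma uAA_eq_sum_pauliCoeff :
    uAA E = (1 / 3 : ℝ) * ∑ i, ∑ j, ‖pauliCoeff E qubitId i j‖ ^ 2 :=
  rfl

lemma unitarity_localBloch (ε : ℝ) :
    unitarity (localBloch E ε b) = (1 / 3 : ℝ) *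
      ∑ i, ∑ j, ‖pauliCoeff E qubitId i j + (ε : ℂ) * pauliCoeff E (blochY b) i j‖ ^ 2 := by
  simp only [unitarity, trace_pauliN_mul_localBloch]

lemma half_mul_unitarity_localBloch_add :
    (1 / 2 : ℝ) * (unitarity (localBloch E 1 b) + unitarity (localBloch E (-1) b))
      = uAA E + (1 / 3 : ℝ) * ∑ i, ∑ j, ‖pauliCoeff E (blochY b) i j‖ ^ 2 := by
  have parallelogram := sum_sum_norm_add_sq_add_sum_sum_norm_sub_sq
    (pauliCoeff E qubitId) (pauliCoeff E (blochY b))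
  simp only [unitarity_localBloch, Complex.ofReal_one, Complex.ofReal_neg, one_mul, neg_one_mul,
    ← sub_eq_add_neg, Finset.sum_add_distrib] at parallelogram ⊢
  rw [uAA_eq_sum_pauliCoeff]
  linarith

end PauliCoeff

lemma pauliCoeff_eq_zero_of_eq_kronecker
    {E : Matrix (Fin 2 × Fin 2) (Fin 2 × Fin 2) ℂ →ₗ[ℂ]
      Matrix (Fin 2 × Fin 2) (Fin 2 × Fin 2) ℂ}
    {EA EB : Matrix (Fin 2) (Fin 2) ℂ →ₗ[ℂ] Matrix (Fin 2) (Fin 2) ℂ}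
    (hE : ∀ MA MB, E (MA ⊗ₖ MB) = EA MA ⊗ₖ EB MB) (hEB : ∀ ρ, (EB ρ).trace = ρ.trace)
    {Y : Matrix (Fin 2) (Fin 2) ℂ} (hY : Y.trace = 0) (i j : Fin 3) :
    pauliCoeff E Y i j = 0 := by
  rw [pauliCoeff, hE, conjTranspose_kronecker, ← Matrix.mul_kronecker_mul,
    Matrix.trace_kronecker, qubitId_conjTranspose, qubitId, Matrix.smul_mul, Matrix.one_mul,
    Matrix.trace_smul, hEB, hY, smul_zero, mul_zero]

theorem subunitarity_bloch_reset_bound_general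
    (E : Matrix (Fin 2 × Fin 2) (Fin 2 × Fin 2) ℂ →ₗ[ℂ]
         Matrix (Fin 2 × Fin 2) (Fin 2 × Fin 2) ℂ)
    (b : Fin 3 → ℝ) :
    uAA E ≤ (1 / 2 : ℝ) * (unitarity (localBloch E 1 b) + unitarity (localBloch E (-1) b))
    ∧
    (∀ (EA EB : Matrix (Fin 2) (Fin 2) ℂ →ₗ[ℂ] Matrix (Fin 2) (Fin 2) ℂ),
        (choi EA).PosSemidef → (∀ ρ, (EA ρ).trace = ρ.trace) →
        (choi EB).PosSemidef → (∀ ρ, (EB ρ).trace = ρ.trace) →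
        (∀ (MA MB : Matrix (Fin 2) (Fin 2) ℂ), E (MA ⊗ₖ MB) = (EA MA) ⊗ₖ (EB MB)) →
        uAA E = (1 / 2 : ℝ) *
          (unitarity (localBloch E 1 b) + unitarity (localBloch E (-1) b))) := by
  rw [half_mul_unitarity_localBloch_add]
  refine ⟨le_add_of_nonneg_right (by positivity), fun EA EB _ _ _ hEB hE => ?_⟩
  simp [pauliCoeff_eq_zero_of_eq_kronecker hE hEB (trace_blochY b)]

/-- For a two-qubit channel `E` and a unit Bloch vector `b`, the sub-unitarity satisfies
`u_{A→A}(E) ≤ (1/2)(u(E_{+b}) + u(E_{−b}))`, with equality when `E` is a product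
channel. -/
theorem subunitarity_bloch_reset_bound
    (E : Matrix (Fin 2 × Fin 2) (Fin 2 × Fin 2) ℂ →ₗ[ℂ]
         Matrix (Fin 2 × Fin 2) (Fin 2 × Fin 2) ℂ)
    (hCP : (choi E).PosSemidef) (hTP : ∀ ρ, (E ρ).trace = ρ.trace)
    (b : Fin 3 → ℝ) (hb : ∑ i, b i ^ 2 = 1) :
    uAA E ≤ (1 / 2 : ℝ) * (unitarity (localBloch E 1 b) + unitarity (localBloch E (-1) b))
    ∧
    (∀ (EA EB : Matrix (Fin 2) (Fin 2) ℂ →ₗ[ℂ] Matrix (Fin 2) (Fin 2) ℂ),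
        (choi EA).PosSemidef → (∀ ρ, (EA ρ).trace = ρ.trace) →
        (choi EB).PosSemidef → (∀ ρ, (EB ρ).trace = ρ.trace) →
        (∀ (MA MB : Matrix (Fin 2) (Fin 2) ℂ), E (MA ⊗ₖ MB) = (EA MA) ⊗ₖ (EB MB)) →
        uAA E = (1 / 2 : ℝ) *
          (unitarity (localBloch E 1 b) + unitarity (localBloch E (-1) b))) :=
  subunitarity_bloch_reset_bound_general E b
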